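/- Let V and H' be real separable Hilbert spaces with Hilbert bases (e_n)_{n∈ℕ} of V and (g_n)_{n∈ℕ} of H', let ν be a Borel probability measure on V with finite second moment, let S ⊆ V be a Borel set, let M > 0, and let Σ : S → H' be a Borel measurable map satisfying ‖Σ(T)‖_{H'} ≤ M for every T ∈ S. Then for every ε > 0 there exist d, m ∈ ℕ and a continuous function f : ℝ^d → ℝ^m such that the DeepONet F = E_{H',m} ∘ f ∘ P_{V,d} satisfies ∫_S ‖Σ(T) − F(T)‖_{H'}² dν(T) < ε. -/

import Mathlib

open MeasureTheory
open scoped RealInnerProductSpace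

/-- The projection map `P_{V,d} : V → ℝ^d`, `x ↦ (⟪x,e₁⟫, …, ⟪x,e_d⟫)`,
associated with a Hilbert basis `e` of `V`. -/
noncomputable def projMap {V : Type*} [NormedAddCommGroup V] [InnerProductSpace ℝ V]
    (e : HilbertBasis ℕ ℝ V) (d : ℕ) (x : V) : EuclideanSpace ℝ (Fin d) :=
  WithLp.toLp 2 (fun i : Fin d => ⟪x, e i⟫)

/-- The extension map `E_{H',m} : ℝ^m → H'`, `a ↦ ∑_{i=1}^m aᵢ gᵢ`,
associated with a Hilbert basis `g` of `H'`. -/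
noncomputable def extMap {H' : Type*} [NormedAddCommGroup H'] [InnerProductSpace ℝ H']
    (g : HilbertBasis ℕ ℝ H') (m : ℕ) (a : EuclideanSpace ℝ (Fin m)) : H' :=
  ∑ i : Fin m, a i • g i

/-! Approximate `Sig` in `L²(ν|_S)` by a bounded continuous `u : V → H'`. The partial sums
`Πₙ x = ∑_{i<n} ⟪x, bᵢ⟫ bᵢ` of a Hilbert basis are `1`-Lipschitz and tend to the identity
pointwise, so `Πₙ ∘ u ∘ Πₙ → u` pointwise with the uniform bound `2‖u‖`, hence in `L²` by
dominated convergence. Finally `Π^{H'}ₙ ∘ u ∘ Π^Vₙ` is the DeepONet with the continuous core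
`P_{H',n} ∘ u ∘ E_{V,n}`. -/

open Filter Topology
open scoped BoundedContinuousFunction

section PartialSums

variable {E : Type*} [NormedAddCommGroup E] [InnerProductSpace ℝ E] (b : HilbertBasis ℕ ℝ E)
  (n : ℕ)

theorem continuous_projMap : Continuous (projMap b n) := by
  unfold projMap; fun_prop

theorem continuous_extMap : Continuous (extMap b n) := by
  unfold extMap; fun_prop

theorem projMap_sub (x y : E) : projMap b n (x - y) = projMap b n x - projMap b n y := by
  ext i; simp [projMap, inner_sub_left]

theorem extMap_sub (a a' : EuclideanSpace ℝ (Fin n)) :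
    extMap b n (a - a') = extMap b n a - extMap b n a' := by
  simp [extMap, sub_smul, Finset.sum_sub_distrib]

theorem norm_extMap (a : EuclideanSpace ℝ (Fin n)) : ‖extMap b n a‖ = ‖a‖ := by
  have hv : Orthonormal ℝ (fun i : Fin n => b i) := b.orthonormal.comp _ Fin.val_injective
  rw [← sq_eq_sq₀ (norm_nonneg _) (norm_nonneg _), ← real_inner_self_eq_norm_sq,
    extMap, hv.inner_sum, EuclideanSpace.norm_sq_eq]
  simp [sq]

theorem norm_projMap_le (x : E) : ‖projMap b n x‖ ≤ ‖x‖ := by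
  have hv : Orthonormal ℝ (fun i : Fin n => b i) := b.orthonormal.comp _ Fin.val_injective
  rw [← sq_le_sq₀ (norm_nonneg _) (norm_nonneg _), EuclideanSpace.norm_sq_eq]
  simpa [projMap, real_inner_comm] using hv.sum_inner_products_le x (s := Finset.univ)

noncomputable def basisPartialSum (x : E) : E := extMap b n (projMap b n x)

theorem basisPartialSum_eq_sum_range (x : E) :
    basisPartialSum b n x = ∑ i ∈ Finset.range n, ⟪x, b i⟫ • b i :=
  Fin.sum_univ_eq_sum_range (fun i => ⟪x, b i⟫ • b i) n

theorem tendsto_basisPartialSum (x : E) :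
    Tendsto (fun n => basisPartialSum b n x) atTop (𝓝 x) := by
  simp_rw [basisPartialSum_eq_sum_range]
  convert (b.hasSum_repr x).tendsto_sum_nat using 3
  rw [b.repr_apply_apply, real_inner_comm]

theorem lipschitzWith_basisPartialSum : LipschitzWith 1 (basisPartialSum b n) :=
  LipschitzWith.of_dist_le_mul fun x y => by
    simp only [NNReal.coe_one, one_mul, dist_eq_norm, basisPartialSum, ← extMap_sub,
      ← projMap_sub, norm_extMap, norm_projMap_le]

theorem norm_basisPartialSum_le (x : E) : ‖basisPartialSum b n x‖ ≤ ‖x‖ :=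
  (norm_extMap b n _).trans_le (norm_projMap_le b n x)

end PartialSums

theorem tendsto_apply_of_lipschitzWith_one {X : Type*} [PseudoMetricSpace X] {P : ℕ → X → X}
    (hP : ∀ n, LipschitzWith 1 (P n)) {x : X} (hPx : Tendsto (fun n => P n x) atTop (𝓝 x))
    {y : ℕ → X} (hy : Tendsto y atTop (𝓝 x)) : Tendsto (fun n => P n (y n)) atTop (𝓝 x) := by
  rw [tendsto_iff_dist_tendsto_zero] at *
  refine squeeze_zero (fun n => dist_nonneg) (fun n => ?_) (by simpa using hy.add hPx)
  calc dist (P n (y n)) x ≤ dist (P n (y n)) (P n x) + dist (P n x) x := dist_triangle _ _ _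
    _ ≤ dist (y n) x + dist (P n x) x := by
        gcongr; simpa using (hP n).dist_le_mul (y n) x

theorem tendsto_basisPartialSum_comp {V H : Type*} [NormedAddCommGroup V] [InnerProductSpace ℝ V]
    [NormedAddCommGroup H] [InnerProductSpace ℝ H] (e : HilbertBasis ℕ ℝ V)
    (g : HilbertBasis ℕ ℝ H) {u : V → H} (hu : Continuous u) (x : V) :
    Tendsto (fun n => basisPartialSum g n (u (basisPartialSum e n x))) atTop (𝓝 (u x)) :=
  tendsto_apply_of_lipschitzWith_one (lipschitzWith_basisPartialSum g)
    (tendsto_basisPartialSum g (u x)) ((hu.tendsto x).comp (tendsto_basisPartialSum e x))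

theorem tendsto_integral_norm_sub_basisPartialSum_comp_sq {V H : Type*} [NormedAddCommGroup V]
    [InnerProductSpace ℝ V] [MeasurableSpace V] [OpensMeasurableSpace V]
    [NormedAddCommGroup H] [InnerProductSpace ℝ H] (e : HilbertBasis ℕ ℝ V)
    (g : HilbertBasis ℕ ℝ H) (u : V →ᵇ H) (μ : Measure V) [IsFiniteMeasure μ] :
    Tendsto (fun n => ∫ x, ‖u x - basisPartialSum g n (u (basisPartialSum e n x))‖ ^ 2 ∂μ)
      atTop (𝓝 0) := by
  have hcont : ∀ n, Continuous (basisPartialSum e n) := fun n =>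
    (lipschitzWith_basisPartialSum e n).continuous
  have hbound : ∀ n x, ‖u x - basisPartialSum g n (u (basisPartialSum e n x))‖ ≤ 2 * ‖u‖ :=
    fun n x => calc
      _ ≤ ‖u x‖ + ‖basisPartialSum g n (u (basisPartialSum e n x))‖ := norm_sub_le _ _
      _ ≤ ‖u‖ + ‖u‖ := add_le_add (u.norm_coe_le_norm x)
          ((norm_basisPartialSum_le g n _).trans (u.norm_coe_le_norm _))
      _ = 2 * ‖u‖ := by ring
  rw [← integral_zero V ℝ (μ := μ)]
  refine tendsto_integral_of_dominated_convergence (fun _ => (2 * ‖u‖) ^ 2)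
    (fun n => (((u.continuous.sub ((lipschitzWith_basisPartialSum g n).continuous.comp
      (u.continuous.comp (hcont n)))).norm.pow 2).aestronglyMeasurable))
    (integrable_const (μ := μ) _)
    (fun n => ae_of_all _ fun x => by
      simpa using pow_le_pow_left₀ (norm_nonneg _) (hbound n x) 2)
    (ae_of_all _ fun x => by
      simpa using ((tendsto_basisPartialSum_comp e g u.continuous x).const_sub (u x)).norm.pow 2)

theorem integral_norm_sub_sq_le {α E : Type*} [MeasurableSpace α] [NormedAddCommGroup E]
    {μ : Measure α} {f g h : α → E} (hf : MemLp f 2 μ) (hg : MemLp g 2 μ) (hh : MemLp h 2 μ) :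
    ∫ x, ‖f x - h x‖ ^ 2 ∂μ ≤ 2 * ∫ x, ‖f x - g x‖ ^ 2 ∂μ + 2 * ∫ x, ‖g x - h x‖ ^ 2 ∂μ := by
  have hfg : Integrable (fun x => ‖f x - g x‖ ^ 2) μ := (hf.sub hg).integrable_norm_pow two_ne_zero
  have hgh : Integrable (fun x => ‖g x - h x‖ ^ 2) μ := (hg.sub hh).integrable_norm_pow two_ne_zero
  rw [← integral_const_mul, ← integral_const_mul,
    ← integral_add (hfg.const_mul 2) (hgh.const_mul 2)]
  refine integral_mono_of_nonneg (ae_of_all _ fun x => by positivity)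
    ((hfg.const_mul 2).add (hgh.const_mul 2)) (ae_of_all _ fun x => ?_)
  have htri : ‖f x - h x‖ ≤ ‖f x - g x‖ + ‖g x - h x‖ := norm_sub_le_norm_sub_add_norm_sub _ _ _
  nlinarith [norm_nonneg (f x - h x), sq_nonneg (‖f x - g x‖ - ‖g x - h x‖)]

theorem MeasureTheory.MemLp.exists_boundedContinuous_integral_norm_sub_sq_le {α E : Type*}
    [TopologicalSpace α] [NormalSpace α] [MeasurableSpace α] [BorelSpace α]
    [NormedAddCommGroup E] [NormedSpace ℝ E] {μ : Measure α} [μ.WeaklyRegular] {f : α → E}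
    (hf : MemLp f 2 μ) {ε : ℝ} (hε : 0 < ε) :
    ∃ u : α →ᵇ E, ∫ x, ‖f x - u x‖ ^ 2 ∂μ ≤ ε ∧ MemLp u 2 μ := by
  have h2 : ENNReal.ofReal 2 = 2 := by simp
  obtain ⟨u, hfu, hu⟩ := (h2 ▸ hf).exists_boundedContinuous_integral_rpow_sub_le two_pos hε
  exact ⟨u, by simpa only [Real.rpow_two] using hfu, h2 ▸ hu⟩

theorem stmt_14_general (V H' : Type*) [NormedAddCommGroup V] [InnerProductSpace ℝ V]
    [NormedAddCommGroup H'] [InnerProductSpace ℝ H']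
    [MeasurableSpace V] [BorelSpace V]
    (e : HilbertBasis ℕ ℝ V) (g : HilbertBasis ℕ ℝ H')
    (ν : Measure V) [IsProbabilityMeasure ν]
    (S : Set V) (hS : MeasurableSet S)
    (M : ℝ)
    (Sig : V → H') (hSigmeas : AEStronglyMeasurable Sig (ν.restrict S))
    (hSigbdd : ∀ T ∈ S, ‖Sig T‖ ≤ M)
    (ε : ℝ) (hε : 0 < ε) :
    ∃ (d m : ℕ) (f : EuclideanSpace ℝ (Fin d) → EuclideanSpace ℝ (Fin m)),
      Continuous f ∧
      IntegrableOn (fun T : V => ‖Sig T - extMap g m (f (projMap e d T))‖ ^ 2) S ν ∧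
      ∫ T in S, ‖Sig T - extMap g m (f (projMap e d T))‖ ^ 2 ∂ν < ε := by
  have hSig : MemLp Sig 2 (ν.restrict S) :=
    MemLp.of_bound hSigmeas M ((ae_restrict_iff' hS).2 (ae_of_all _ hSigbdd))
  obtain ⟨u, hSig_u, hu⟩ := hSig.exists_boundedContinuous_integral_norm_sub_sq_le
    (by positivity : 0 < ε / 8)
  obtain ⟨n, hu_n⟩ := ((tendsto_integral_norm_sub_basisPartialSum_comp_sq e g u
    (ν.restrict S)).eventually_lt_const (by positivity : 0 < ε / 8)).exists
  let f := projMap g n ∘ u ∘ extMap e n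
  have hf : Continuous f :=
    (continuous_projMap g n).comp (u.continuous.comp (continuous_extMap e n))
  have hF : MemLp (fun T => extMap g n (f (projMap e n T))) 2 (ν.restrict S) :=
    .of_bound ((continuous_extMap g n).comp_aestronglyMeasurable
        (hf.comp (continuous_projMap e n)).aestronglyMeasurable) ‖u‖
      (ae_of_all _ fun T => (norm_basisPartialSum_le g n _).trans (u.norm_coe_le_norm _))
  refine ⟨n, n, f, hf, (hSig.sub hF).integrable_norm_pow two_ne_zero, ?_⟩
  calc _ ≤ 2 * ∫ T in S, ‖Sig T - u T‖ ^ 2 ∂ν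
        + 2 * ∫ T in S, ‖u T - basisPartialSum g n (u (basisPartialSum e n T))‖ ^ 2 ∂ν :=
        integral_norm_sub_sq_le hSig hu hF
    _ < ε := by linarith

/-- a bounded Borel measurable map defined on a Borel subset
`S` of a separable Hilbert space, with values in another separable Hilbert
space, can be approximated by DeepONets in the `L²(ν)` sense on `S`. -/
theorem stmt_14 (V H' : Type*) [NormedAddCommGroup V] [InnerProductSpace ℝ V]
    [NormedAddCommGroup H'] [InnerProductSpace ℝ H']
    [MeasurableSpace V] [BorelSpace V]
    (e : HilbertBasis ℕ ℝ V) (g : HilbertBasis ℕ ℝ H')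
    (ν : Measure V) [IsProbabilityMeasure ν]
    (hν : Integrable (fun x : V => ‖x‖ ^ 2) ν)
    (S : Set V) (hS : MeasurableSet S)
    (M : ℝ) (hM : 0 < M)
    (Sig : V → H') (hSigmeas : AEStronglyMeasurable Sig (ν.restrict S))
    (hSigbdd : ∀ T ∈ S, ‖Sig T‖ ≤ M)
    (ε : ℝ) (hε : 0 < ε) :
    ∃ (d m : ℕ) (f : EuclideanSpace ℝ (Fin d) → EuclideanSpace ℝ (Fin m)),
      Continuous f ∧
      IntegrableOn (fun T : V => ‖Sig T - extMap g m (f (projMap e d T))‖ ^ 2) S ν ∧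
      ∫ T in S, ‖Sig T - extMap g m (f (projMap e d T))‖ ^ 2 ∂ν < ε :=
  stmt_14_general V H' e g ν S hS M Sig hSigmeas hSigbdd ε hε
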